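/- arXiv:2306.13065 — 2 statements merged into one kernel-verified Lean document; each statement's English description precedes it below -/
import Mathlib

section
/- For n ≥ 2, let M_n be the set of preference lists α = (p₁,…,pₙ) ∈ [n]^n with exactly n−1 lucky cars in which car 1 is a competing car, i.e., p₁ = p_j for some j ≥ 2. Then |M_n| = n·|M_{n−1}| + 2·(n−1)! for all n ≥ 3 (with |M_2| = 2). -/
open Finset

/-- The first unoccupied spot numbered greater than or equal to `p`, if any. -/
def nextSpot {n : ℕ} (occ : Finset (Fin n)) (p : Fin n) : Option (Fin n) :=
  if h : (Finset.univ.filter (fun s : Fin n => p ≤ s ∧ s ∉ occ)).Nonempty then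
    some ((Finset.univ.filter (fun s : Fin n => p ≤ s ∧ s ∉ occ)).min' h)
  else none

/-- The set of occupied spots after the first `k` cars have tried to park,
given the preference list `α`. -/
def occupiedAfter {n : ℕ} (α : Fin n → Fin n) : ℕ → Finset (Fin n)
  | 0 => ∅
  | k + 1 =>
    if h : k < n then
      match nextSpot (occupiedAfter α k) (α ⟨k, h⟩) with
      | some s => insert s (occupiedAfter α k)
      | none => occupiedAfter α k
    else occupiedAfter α k

/-- The spot in which car `i` parks (cars numbered `0,…,n-1` enter in order),
or `none` if car `i` is unable to park. -/
def carSpot {n : ℕ} (α : Fin n → Fin n) (i : Fin n) : Option (Fin n) :=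
  nextSpot (occupiedAfter α i.val) (α i)

/-- The number of lucky cars: cars parking exactly in their preferred spot. -/
def luckyCount {n : ℕ} (α : Fin n → Fin n) : ℕ :=
  (Finset.univ.filter (fun i : Fin n => carSpot α i = some (α i))).card

/-- `L n` is the number of preference lists in `[n]^n` with exactly `n - 1` lucky cars. -/
def luckyL (n : ℕ) : ℕ :=
  (Finset.univ.filter
    (fun α : Fin n → Fin n => (luckyCount α : ℤ) = (n : ℤ) - 1)).card

/-- The `n`th harmonic number. -/
noncomputable def H (n : ℕ) : ℝ := ∑ i ∈ Finset.Icc 1 n, (1 : ℝ) / i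

/-- `competingM n` is the number of preference lists in `[n]^n` with exactly `n-1`
lucky cars in which car 1 is a competing car, i.e. some later car shares its
preference. -/
def competingM (n : ℕ) : ℕ :=
  (Finset.univ.filter (fun α : Fin n → Fin n =>
      (luckyCount α : ℤ) = (n : ℤ) - 1 ∧
      ∃ i j : Fin n, (i : ℕ) = 0 ∧ j ≠ i ∧ α j = α i)).card


section Dynamics
variable {n : ℕ}

lemma nextSpot_eq_some_iff {occ : Finset (Fin n)} {p s : Fin n} :
    nextSpot occ p = some s ↔ (p ≤ s ∧ s ∉ occ ∧ ∀ t, p ≤ t → t < s → t ∈ occ) := by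
  unfold nextSpot
  split_ifs with h
  · simp only [Option.some.injEq]
    constructor
    · rintro rfl
      have hm := Finset.min'_mem _ h
      simp only [mem_filter] at hm
      refine ⟨hm.2.1, hm.2.2, fun t hpt hts => ?_⟩
      by_contra htocc
      have : (univ.filter (fun s : Fin n => p ≤ s ∧ s ∉ occ)).min' h ≤ t :=
        Finset.min'_le _ t (by simp [hpt, htocc])
      exact absurd (lt_of_le_of_lt this hts) (lt_irrefl _)
    · rintro ⟨hps, hsocc, hall⟩
      apply le_antisymm
      · exact Finset.min'_le _ s (by simp [hps, hsocc])
      · apply Finset.le_min'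
        intro t ht
        simp only [mem_filter] at ht
        by_contra hlt
        push_neg at hlt
        exact ht.2.2 (hall t ht.2.1 hlt)
  · constructor
    · intro hc; exact absurd hc (by simp)
    · rintro ⟨hps, hsocc, -⟩
      exact absurd ⟨s, by simp [hps, hsocc]⟩ h

lemma nextSpot_eq_none_iff {occ : Finset (Fin n)} {p : Fin n} :
    nextSpot occ p = none ↔ ∀ t, p ≤ t → t ∈ occ := by
  unfold nextSpot
  split_ifs with h
  · constructor
    · intro hc; exact absurd hc (by simp)
    · intro hall
      have hm := Finset.min'_mem _ h
      simp only [mem_filter] at hm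
      exact absurd (hall _ hm.2.1) hm.2.2
  · rw [Finset.not_nonempty_iff_eq_empty] at h
    simp only [true_iff]
    intro t hpt
    by_contra htocc
    have : t ∈ (univ.filter (fun s : Fin n => p ≤ s ∧ s ∉ occ)) := by simp [hpt, htocc]
    simp [h] at this

lemma nextSpot_some_of_not_mem {occ : Finset (Fin n)} {p : Fin n} (h : p ∉ occ) :
    nextSpot occ p = some p :=
  nextSpot_eq_some_iff.2 ⟨le_refl _, h, fun t hpt hts => absurd (lt_of_le_of_lt hpt hts) (lt_irrefl _)⟩

lemma occupiedAfter_succ (α : Fin n → Fin n) (k : ℕ) (h : k < n) :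
    occupiedAfter α (k + 1) =
      match carSpot α ⟨k, h⟩ with
      | some s => insert s (occupiedAfter α k)
      | none => occupiedAfter α k := by
  rw [occupiedAfter, dif_pos h]; rfl

lemma occupiedAfter_subset_succ (α : Fin n → Fin n) (k : ℕ) :
    occupiedAfter α k ⊆ occupiedAfter α (k + 1) := by
  rw [occupiedAfter]
  split_ifs with h
  · cases hns : nextSpot (occupiedAfter α k) (α ⟨k, h⟩) with
    | none => simp
    | some s => simp only; exact Finset.subset_insert _ _
  · exact subset_rfl

lemma occupiedAfter_mono (α : Fin n → Fin n) {k l : ℕ} (h : k ≤ l) :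
    occupiedAfter α k ⊆ occupiedAfter α l := by
  induction l with
  | zero => simp_all
  | succ l ih =>
    rcases Nat.lt_or_ge k (l+1) with h'|h'
    · exact (ih (Nat.lt_succ_iff.1 h')).trans (occupiedAfter_subset_succ α l)
    · have : k = l + 1 := le_antisymm h h'
      subst this; exact subset_rfl

lemma mem_occupiedAfter_iff (α : Fin n → Fin n) (k : ℕ) (s : Fin n) :
    s ∈ occupiedAfter α k ↔ ∃ i : Fin n, i.val < k ∧ carSpot α i = some s := by
  induction k with
  | zero => simp [occupiedAfter]
  | succ k ih =>
    rcases Nat.lt_or_ge k n with h|h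
    · rw [occupiedAfter_succ α k h]
      cases hns : carSpot α ⟨k, h⟩ with
      | none =>
        simp only [ih]
        constructor
        · rintro ⟨i, hik, hi⟩; exact ⟨i, hik.trans (Nat.lt_succ_self k), hi⟩
        · rintro ⟨i, hik, hi⟩
          rcases Nat.lt_or_ge i.val k with h'|h'
          · exact ⟨i, h', hi⟩
          · have : i = ⟨k, h⟩ := Fin.ext (le_antisymm (Nat.lt_succ_iff.1 hik) h')
            rw [this, hns] at hi; exact absurd hi (by simp)
      | some t =>
        simp only [Finset.mem_insert, ih]
        constructor
        · rintro (rfl|⟨i, hik, hi⟩)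
          · exact ⟨⟨k, h⟩, Nat.lt_succ_self k, hns⟩
          · exact ⟨i, hik.trans (Nat.lt_succ_self k), hi⟩
        · rintro ⟨i, hik, hi⟩
          rcases Nat.lt_or_ge i.val k with h'|h'
          · exact Or.inr ⟨i, h', hi⟩
          · have : i = ⟨k, h⟩ := Fin.ext (le_antisymm (Nat.lt_succ_iff.1 hik) h')
            rw [this, hns] at hi
            exact Or.inl (by injection hi.symm)
    · rw [occupiedAfter, dif_neg (by omega)]
      rw [ih]
      constructor
      · rintro ⟨i, hik, hi⟩; exact ⟨i, hik.trans (Nat.lt_succ_self k), hi⟩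
      · rintro ⟨i, hik, hi⟩
        exact ⟨i, lt_of_lt_of_le i.isLt h, hi⟩

lemma lucky_iff {α : Fin n → Fin n} (i : Fin n) :
    carSpot α i = some (α i) ↔ α i ∉ occupiedAfter α i.val := by
  constructor
  · intro h; exact (nextSpot_eq_some_iff.1 h).2.1
  · intro h; exact nextSpot_some_of_not_mem h

lemma carSpot_not_mem {α : Fin n → Fin n} {i : Fin n} {s : Fin n} (h : carSpot α i = some s) :
    s ∉ occupiedAfter α i.val :=
  (nextSpot_eq_some_iff.1 h).2.1

lemma carSpot_mem_succ {α : Fin n → Fin n} {i : Fin n} {s : Fin n} (h : carSpot α i = some s) :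
    s ∈ occupiedAfter α (i.val + 1) := by
  rw [occupiedAfter_succ α i.val i.isLt]
  have : (⟨i.val, i.isLt⟩ : Fin n) = i := rfl
  rw [this, h]
  simp

end Dynamics

section Charac
variable {n : ℕ}

/-- Structural characterization predicate. -/
def Qpred (α : Fin (n+1) → Fin (n+1)) : Prop :=
  ∃ j m : Fin (n+1), j ≠ 0 ∧ α j = α 0 ∧
    (∀ i i' : Fin (n+1), i ≠ j → i' ≠ j → α i = α i' → i = i') ∧
    (∀ i : Fin (n+1), i ≠ j → m ≠ α i) ∧
    (∀ i : Fin (n+1), i ≠ j → α 0 < α i → (α i < m ∨ m < α 0) → i < j)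

lemma compl_image_singleton {α : Fin (n+1) → Fin (n+1)} {j m : Fin (n+1)}
    (hinj : ∀ i i' : Fin (n+1), i ≠ j → i' ≠ j → α i = α i' → i = i')
    (hm : ∀ i : Fin (n+1), i ≠ j → m ≠ α i) :
    ∀ t : Fin (n+1), t ≠ m → ∃ i : Fin (n+1), i ≠ j ∧ α i = t := by
  intro t ht
  by_contra hc
  push_neg at hc
  have hcard : ((Finset.univ.erase j).image α).card = n := by
    rw [Finset.card_image_of_injOn (fun i hi i' hi' hii =>
      hinj i i' (Finset.ne_of_mem_erase hi) (Finset.ne_of_mem_erase hi') hii),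
      Finset.card_erase_of_mem (Finset.mem_univ j), Finset.card_univ, Fintype.card_fin]
    omega
  have hmm : m ∉ (Finset.univ.erase j).image α := by
    simp only [Finset.mem_image]
    rintro ⟨i, hi, rfl⟩
    exact hm i (Finset.ne_of_mem_erase hi) rfl
  have htm : t ∉ (Finset.univ.erase j).image α := by
    simp only [Finset.mem_image]
    rintro ⟨i, hi, rfl⟩
    exact hc i (Finset.ne_of_mem_erase hi) rfl
  have : (insert m (insert t ((Finset.univ.erase j).image α))).card ≤ (Finset.univ : Finset (Fin (n+1))).card :=
    Finset.card_le_card (Finset.subset_univ _)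
  rw [Finset.card_insert_of_notMem
      (by simp only [Finset.mem_insert]; push_neg; exact ⟨fun h => ht h.symm, hmm⟩),
    Finset.card_insert_of_notMem htm,
    hcard, Finset.card_univ, Fintype.card_fin] at this
  omega

lemma charac (α : Fin (n+1) → Fin (n+1)) :
    (luckyCount α = n ∧ ∃ i j : Fin (n+1), (i : ℕ) = 0 ∧ j ≠ i ∧ α j = α i) ↔ Qpred α := by
  constructor
  · rintro ⟨hlc, i0, j, hi0, hji, hαj⟩
    have hi00 : i0 = 0 := Fin.ext (by simpa using hi0)
    subst hi00
    -- car 0 is lucky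
    have h0lucky : carSpot α 0 = some (α 0) := by
      rw [lucky_iff]
      simp [occupiedAfter]
    have hv1 : α 0 ∈ occupiedAfter α 1 := by
      have := carSpot_mem_succ h0lucky
      simpa using this
    have hjpos : 0 < (j : ℕ) := by
      rcases Nat.eq_zero_or_pos (j : ℕ) with h|h
      · exact absurd (Fin.ext (by simpa using h)) hji
      · exact h
    have hvj : ∀ k, 1 ≤ k → α 0 ∈ occupiedAfter α k :=
      fun k hk => occupiedAfter_mono α hk hv1
    -- j is not lucky
    have hjnl : carSpot α j ≠ some (α j) := by
      intro h
      have h' := (lucky_iff j).1 h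
      rw [hαj] at h'
      exact h' (hvj _ hjpos)
    -- all cars other than j are lucky
    have hfilter : Finset.univ.filter (fun i : Fin (n+1) => carSpot α i = some (α i))
        = Finset.univ.erase j := by
      apply Finset.eq_of_subset_of_card_le
      · intro i hi
        simp only [Finset.mem_filter] at hi
        refine Finset.mem_erase.2 ⟨?_, Finset.mem_univ i⟩
        rintro rfl
        exact hjnl hi.2
      · rw [Finset.card_erase_of_mem (Finset.mem_univ j), Finset.card_univ, Fintype.card_fin]
        unfold luckyCount at hlc
        omega
    have hlucky : ∀ i : Fin (n+1), i ≠ j → carSpot α i = some (α i) := by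
      intro i hij
      have : i ∈ Finset.univ.erase j := Finset.mem_erase.2 ⟨hij, Finset.mem_univ i⟩
      rw [← hfilter, Finset.mem_filter] at this
      exact this.2
    -- injectivity off j
    have hinj : ∀ i i' : Fin (n+1), i ≠ j → i' ≠ j → α i = α i' → i = i' := by
      intro i i' hij hi'j hαii'
      by_contra hne
      rcases Nat.lt_or_ge (i : ℕ) (i' : ℕ) with h|h
      · have h1 : α i ∈ occupiedAfter α ((i:ℕ)+1) := carSpot_mem_succ (hlucky i hij)
        have h2 : α i ∈ occupiedAfter α (i':ℕ) := occupiedAfter_mono α h h1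
        rw [hαii'] at h2
        exact (lucky_iff i').1 (hlucky i' hi'j) h2
      · have hlt : (i' : ℕ) < (i : ℕ) := by
          have hne' : (i : ℕ) ≠ (i' : ℕ) := fun he => hne (Fin.ext he)
          omega
        have h1 : α i' ∈ occupiedAfter α ((i':ℕ)+1) := carSpot_mem_succ (hlucky i' hi'j)
        have h2 : α i' ∈ occupiedAfter α (i:ℕ) := occupiedAfter_mono α hlt h1
        rw [← hαii'] at h2
        exact (lucky_iff i).1 (hlucky i hij) h2
    -- existence of missing spot
    have hScard : ((Finset.univ.erase j).image α).card = n := by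
      rw [Finset.card_image_of_injOn (fun i hi i' hi' hii =>
        hinj i i' (Finset.ne_of_mem_erase hi) (Finset.ne_of_mem_erase hi') hii),
        Finset.card_erase_of_mem (Finset.mem_univ j), Finset.card_univ, Fintype.card_fin]
      omega
    have hmex : ∃ m : Fin (n+1), m ∉ (Finset.univ.erase j).image α := by
      by_contra hc
      push_neg at hc
      have : (Finset.univ : Finset (Fin (n+1))) ⊆ (Finset.univ.erase j).image α :=
        fun t _ => hc t
      have := Finset.card_le_card this
      rw [hScard, Finset.card_univ, Fintype.card_fin] at this
      omega
    obtain ⟨m, hm⟩ := hmex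
    have hmne : ∀ i : Fin (n+1), i ≠ j → m ≠ α i := by
      intro i hij he
      exact hm (Finset.mem_image.2 ⟨i, Finset.mem_erase.2 ⟨hij, Finset.mem_univ i⟩, he.symm⟩)
    refine ⟨j, m, fun h => hji (h ▸ rfl), hαj, hinj, hmne, ?_⟩
    -- block condition
    intro i hij hvlt hblock
    by_contra hc
    push_neg at hc
    have hjlt : (j : ℕ) < (i : ℕ) := by
      have hne' : (i : ℕ) ≠ (j : ℕ) := fun he => hij (Fin.ext he)
      omega
    -- α i is free at time j
    have hfree : α i ∉ occupiedAfter α (j : ℕ) := by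
      intro hmem
      exact (lucky_iff i).1 (hlucky i hij) (occupiedAfter_mono α (le_of_lt hjlt) hmem)
    -- so car j parks somewhere
    have hjs : ∃ s, carSpot α j = some s := by
      cases hcs : carSpot α j with
      | none =>
        unfold carSpot at hcs
        have := nextSpot_eq_none_iff.1 hcs (α i) (by rw [hαj]; exact le_of_lt hvlt)
        exact absurd this hfree
      | some s => exact ⟨s, rfl⟩
    obtain ⟨s, hs⟩ := hjs
    unfold carSpot at hs
    rw [hαj] at hs
    obtain ⟨hvs, hsocc, hsmin⟩ := nextSpot_eq_some_iff.1 hs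
    have hsle : s ≤ α i := by
      by_contra hlt
      push_neg at hlt
      exact hfree (hsmin (α i) (le_of_lt hvlt) hlt)
    -- s must equal m
    have hsm : s = m := by
      by_contra hne
      obtain ⟨i'', hi''j, hαi''⟩ := compl_image_singleton hinj hmne s hne
      rcases Nat.lt_or_ge (i'' : ℕ) (j : ℕ) with h|h
      · have : s ∈ occupiedAfter α (j : ℕ) := by
          have := carSpot_mem_succ (by rw [hlucky i'' hi''j, hαi''] : carSpot α i'' = some s)
          exact occupiedAfter_mono α h this
        exact hsocc this
      · have hji'' : (j : ℕ) < (i'' : ℕ) := by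
          have hne' : (i'' : ℕ) ≠ (j : ℕ) := fun he => hi''j (Fin.ext he)
          omega
        have h1 : s ∈ occupiedAfter α ((j:ℕ)+1) := carSpot_mem_succ (show carSpot α j = some s by unfold carSpot; rw [hαj]; exact hs)
        have h2 : s ∈ occupiedAfter α (i'' : ℕ) := occupiedAfter_mono α hji'' h1
        rw [← hαi''] at h2
        exact (lucky_iff i'').1 (hlucky i'' hi''j) h2
    subst hsm
    rcases hblock with hb|hb
    · exact absurd (lt_of_le_of_lt hsle hb) (lt_irrefl _)
    · exact absurd (lt_of_lt_of_le hb hvs) (lt_irrefl _)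
  · rintro ⟨j, m, hj0, hαj, hinj, hmne, hblock⟩
    have hjpos : 0 < (j : ℕ) := by
      rcases Nat.eq_zero_or_pos (j : ℕ) with h|h
      · exact absurd (Fin.ext (by simpa using h)) hj0
      · exact h
    have hmv : m ≠ α 0 := hmne 0 (fun h => hj0 h.symm)
    -- main induction
    have main : ∀ k : ℕ,
        (∀ i : Fin (n+1), (i:ℕ) < k → i ≠ j → carSpot α i = some (α i)) ∧
        ((j:ℕ) < k → carSpot α j = if α 0 < m then some m else none) := by
      intro k
      induction k with
      | zero => exact ⟨fun i hi => absurd hi (Nat.not_lt_zero _), fun h => absurd h (Nat.not_lt_zero _)⟩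
      | succ k ih =>
        have step1 : ∀ i : Fin (n+1), (i:ℕ) < k + 1 → i ≠ j → carSpot α i = some (α i) := by
          intro i hik hij
          rcases Nat.lt_or_ge (i:ℕ) k with h|h
          · exact ih.1 i h hij
          · have hik' : (i : ℕ) = k := by omega
            rw [lucky_iff]
            intro hmem
            obtain ⟨i', hi'k, hi'cs⟩ := (mem_occupiedAfter_iff α _ _).1 hmem
            rw [hik'] at hi'k
            by_cases hi'j : i' = j
            · subst hi'j
              have hjk : (i' : ℕ) < k := hi'k
              have := ih.2 hjk
              rw [this] at hi'cs
              by_cases hvm : α 0 < m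
              · rw [if_pos hvm] at hi'cs
                exact hmne i hij (by injection hi'cs)
              · rw [if_neg hvm] at hi'cs
                exact absurd hi'cs (by simp)
            · rw [ih.1 i' hi'k hi'j] at hi'cs
              have : α i' = α i := by injection hi'cs
              have := hinj i' i hi'j hij this
              subst this
              omega
        refine ⟨step1, ?_⟩
        intro hjk
        rcases Nat.lt_or_ge (j:ℕ) k with h|h
        · exact ih.2 h
        · have hjk' : (j : ℕ) = k := by omega
          -- describe occupiedAfter α j.val
          have hocc : ∀ t : Fin (n+1), t ∈ occupiedAfter α (j:ℕ) ↔
              ∃ i : Fin (n+1), (i:ℕ) < (j:ℕ) ∧ α i = t := by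
            intro t
            rw [mem_occupiedAfter_iff]
            constructor
            · rintro ⟨i, hik, hcs⟩
              have hij : i ≠ j := fun h => by subst h; omega
              rw [step1 i (by omega) hij] at hcs
              exact ⟨i, hik, by injection hcs⟩
            · rintro ⟨i, hik, hαi⟩
              have hij : i ≠ j := fun h => by subst h; omega
              exact ⟨i, hik, by rw [step1 i (by omega) hij, hαi]⟩
          have hfull : ∀ t : Fin (n+1), α 0 ≤ t → (t < m ∨ m < α 0) → t ∈ occupiedAfter α (j:ℕ) := by
            intro t hvt hblk
            have htm : t ≠ m := by
              rcases hblk with h'|h'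
              · exact ne_of_lt h'
              · intro he; subst he; exact absurd (lt_of_lt_of_le h' hvt) (lt_irrefl _)
            obtain ⟨i, hij, hαi⟩ := compl_image_singleton hinj hmne t htm
            rw [hocc]
            refine ⟨i, ?_, hαi⟩
            rcases lt_or_eq_of_le hvt with h'|h'
            · have := hblock i hij (by rw [hαi]; exact h') (by rw [hαi]; exact hblk)
              exact this
            · have : i = 0 := hinj i 0 hij (fun h => hj0 h.symm) (by rw [hαi, ← h'])
              subst this
              exact hjpos
          unfold carSpot
          rw [hαj]
          split_ifs with hvm
          · rw [nextSpot_eq_some_iff]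
            refine ⟨le_of_lt hvm, ?_, ?_⟩
            · rw [hocc]
              rintro ⟨i, hik, hαi⟩
              have hij : i ≠ j := fun h => by subst h; omega
              exact hmne i hij hαi.symm
            · intro t hvt htm
              exact hfull t hvt (Or.inl htm)
          · rw [nextSpot_eq_none_iff]
            intro t hvt
            have hmlt : m < α 0 := by
              rcases lt_trichotomy (α 0) m with h'|h'|h'
              · exact absurd h' hvm
              · exact absurd h'.symm hmv
              · exact h'
            exact hfull t hvt (Or.inr hmlt)
    have hlucky : ∀ i : Fin (n+1), i ≠ j → carSpot α i = some (α i) :=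
      fun i hij => (main (n+1)).1 i i.isLt hij
    have hjnl : carSpot α j ≠ some (α j) := by
      rw [(main (n+1)).2 j.isLt]
      split_ifs with hvm
      · intro h
        have : m = α j := by injection h
        rw [hαj] at this
        exact hmv this
      · simp
    constructor
    · unfold luckyCount
      have : Finset.univ.filter (fun i : Fin (n+1) => carSpot α i = some (α i))
          = Finset.univ.erase j := by
        ext i
        simp only [Finset.mem_filter, Finset.mem_erase, Finset.mem_univ, true_and, and_true]
        constructor
        · intro h
          rintro rfl
          exact hjnl h
        · intro h
          exact hlucky i h
      rw [this, Finset.card_erase_of_mem (Finset.mem_univ j), Finset.card_univ, Fintype.card_fin]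
      omega
    · exact ⟨0, j, rfl, hj0, hαj⟩

end Charac

section Counting

lemma swap_mem_iff {k : ℕ} {S : Finset (Fin k)} {a b : Fin k} (ha : a ∈ S) (hb : b ∈ S)
    (z : Fin k) : Equiv.swap a b z ∈ S ↔ z ∈ S := by
  rcases eq_or_ne z a with rfl|hza
  · rw [Equiv.swap_apply_left]; simp [ha, hb]
  rcases eq_or_ne z b with rfl|hzb
  · rw [Equiv.swap_apply_right]; simp [ha, hb]
  · rw [Equiv.swap_apply_of_ne_of_ne hza hzb]

lemma card_bij_fun (k : ℕ) :
    (Finset.univ.filter (fun β : Fin k → Fin k => Function.Bijective β)).card = k.factorial := by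
  have h : (Finset.univ : Finset (Equiv.Perm (Fin k))).card
      = (Finset.univ.filter (fun β : Fin k → Fin k => Function.Bijective β)).card := by
    apply Finset.card_bij (fun (σ : Equiv.Perm (Fin k)) _ => ⇑σ)
    · intro σ _
      simp only [Finset.mem_filter, Finset.mem_univ, true_and]
      exact σ.bijective
    · intro σ _ τ _ hc
      exact Equiv.coe_fn_injective hc
    · intro β hβ
      simp only [Finset.mem_filter, Finset.mem_univ, true_and] at hβ
      exact ⟨Equiv.ofBijective β hβ, Finset.mem_univ _, rfl⟩
  rw [← h, Finset.card_univ, Fintype.card_perm, Fintype.card_fin]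

lemma card_fixzero (n : ℕ) (v : Fin (n+1)) :
    (Finset.univ.filter (fun β : Fin (n+1) → Fin (n+1) =>
      Function.Bijective β ∧ β 0 = v)).card = n.factorial := by
  have hfib : ∀ w : Fin (n+1),
      (Finset.univ.filter (fun β : Fin (n+1) → Fin (n+1) =>
        Function.Bijective β ∧ β 0 = w)).card
      = (Finset.univ.filter (fun β : Fin (n+1) → Fin (n+1) =>
        Function.Bijective β ∧ β 0 = v)).card := by
    intro w
    apply Finset.card_bij' (fun β _ => ⇑(Equiv.swap w v) ∘ β) (fun β _ => ⇑(Equiv.swap w v) ∘ β)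
    · intro β hβ
      simp only [Finset.mem_filter, Finset.mem_univ, true_and] at hβ ⊢
      refine ⟨(Equiv.swap w v).bijective.comp hβ.1, ?_⟩
      simp [hβ.2]
    · intro β hβ
      simp only [Finset.mem_filter, Finset.mem_univ, true_and] at hβ ⊢
      refine ⟨(Equiv.swap w v).bijective.comp hβ.1, ?_⟩
      simp [hβ.2]
    · intro β _
      funext x
      simp [Equiv.swap_apply_self]
    · intro β _
      funext x
      simp [Equiv.swap_apply_self]
  have hsum := Finset.card_eq_sum_card_fiberwise
    (f := fun β : Fin (n+1) → Fin (n+1) => β 0)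
    (s := Finset.univ.filter (fun β : Fin (n+1) → Fin (n+1) => Function.Bijective β))
    (t := Finset.univ) (fun x _ => Finset.mem_univ _)
  rw [_root_.card_bij_fun] at hsum
  have hre : ∀ w : Fin (n+1),
      ((Finset.univ.filter (fun β : Fin (n+1) → Fin (n+1) => Function.Bijective β)).filter
        (fun β => β 0 = w))
      = Finset.univ.filter (fun β : Fin (n+1) → Fin (n+1) =>
          Function.Bijective β ∧ β 0 = w) := by
    intro w
    rw [Finset.filter_filter]
  rw [Finset.sum_congr rfl (fun w _ => by rw [hre w, hfib w])] at hsum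
  rw [Finset.sum_const, Finset.card_univ, Fintype.card_fin, smul_eq_mul] at hsum
  have hfact : (n+1).factorial = (n+1) * n.factorial := Nat.factorial_succ n
  exact Nat.eq_of_mul_eq_mul_left (Nat.succ_pos n) (hsum.symm.trans hfact)

lemma card_lastcond (n : ℕ) (v m : Fin (n+1)) (B : Finset (Fin (n+1)))
    (hvm : v ≠ m) (hvB : v ∉ B) (hmB : m ∉ B) :
    (Finset.univ.filter (fun β : Fin (n+1) → Fin (n+1) => Function.Bijective β ∧ β 0 = v ∧
      ∀ i i' : Fin (n+1), β i ∈ B → β i' = m → i < i')).card * (B.card + 1) = n.factorial := by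
  classical
  set lastVal : (Fin (n+1) → Fin (n+1)) → Fin (n+1) :=
    fun β => β (WithBot.unbotD 0 ((Finset.univ.filter (fun i => β i ∈ insert m B)).max)) with hlastVal
  set Sv := Finset.univ.filter (fun β : Fin (n+1) → Fin (n+1) =>
    Function.Bijective β ∧ β 0 = v) with hSv
  -- basic facts about the max position
  have hpos : ∀ β : Fin (n+1) → Fin (n+1), Function.Bijective β →
      (WithBot.unbotD 0 ((Finset.univ.filter (fun i => β i ∈ insert m B)).max)
        ∈ Finset.univ.filter (fun i => β i ∈ insert m B)) ∧
      (∀ i ∈ Finset.univ.filter (fun i => β i ∈ insert m B),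
        i ≤ WithBot.unbotD 0 ((Finset.univ.filter (fun i => β i ∈ insert m B)).max)) := by
    intro β hβ
    obtain ⟨i0, hi0⟩ := hβ.2 m
    have hne : (Finset.univ.filter (fun i => β i ∈ insert m B)).Nonempty :=
      ⟨i0, by simp [hi0]⟩
    have hmax : (Finset.univ.filter (fun i => β i ∈ insert m B)).max
        = ((Finset.univ.filter (fun i => β i ∈ insert m B)).max' hne : Fin (n+1)) :=
      (Finset.coe_max' hne).symm
    rw [hmax]
    rw [WithBot.unbotD_coe]
    exact ⟨Finset.max'_mem _ hne, fun i hi => Finset.le_max' _ i hi⟩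
  -- the partition
  have hsum := Finset.card_eq_sum_card_fiberwise
    (f := lastVal) (s := Sv) (t := insert m B) ?_
  swap
  · intro β hβ
    simp only [hSv, Finset.mem_coe, Finset.mem_filter, Finset.mem_univ, true_and] at hβ
    have := (hpos β hβ.1).1
    simp only [Finset.mem_filter, Finset.mem_univ, true_and] at this
    exact this
  -- all fibers have the same cardinality as the fiber of m
  have hfib : ∀ y ∈ insert m B,
      (Sv.filter (fun β => lastVal β = y)).card
        = (Sv.filter (fun β => lastVal β = m)).card := by
    intro y hy
    apply Finset.card_bij' (fun β _ => ⇑(Equiv.swap m y) ∘ β) (fun β _ => ⇑(Equiv.swap m y) ∘ β)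
    · intro β hβ
      simp only [Finset.mem_filter, Finset.mem_univ, true_and, hSv] at hβ ⊢
      obtain ⟨⟨hbij, h0⟩, hlv⟩ := hβ
      have hposeq : (Finset.univ.filter (fun i => (⇑(Equiv.swap m y) ∘ β) i ∈ insert m B))
          = (Finset.univ.filter (fun i => β i ∈ insert m B)) := by
        apply Finset.filter_congr
        intro i _
        simp only [Function.comp_apply]
        rw [swap_mem_iff (Finset.mem_insert_self m B) hy]
      refine ⟨⟨(Equiv.swap m y).bijective.comp hbij, ?_⟩, ?_⟩
      · simp only [Function.comp_apply, h0]
        exact Equiv.swap_apply_of_ne_of_ne hvm (fun h => hvB (by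
          rcases Finset.mem_insert.1 hy with h'|h'
          · exact absurd (h.trans h') hvm
          · exact h ▸ h'))
      · have hlv' : β (WithBot.unbotD 0 ((Finset.univ.filter (fun i => β i ∈ insert m B)).max)) = y := hlv
        simp only [hlastVal, hposeq]
        simp only [Function.comp_apply]
        rw [hlv']
        exact Equiv.swap_apply_right m y
    · intro β hβ
      simp only [Finset.mem_filter, Finset.mem_univ, true_and, hSv] at hβ ⊢
      obtain ⟨⟨hbij, h0⟩, hlv⟩ := hβ
      have hposeq : (Finset.univ.filter (fun i => (⇑(Equiv.swap m y) ∘ β) i ∈ insert m B))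
          = (Finset.univ.filter (fun i => β i ∈ insert m B)) := by
        apply Finset.filter_congr
        intro i _
        simp only [Function.comp_apply]
        rw [swap_mem_iff (Finset.mem_insert_self m B) hy]
      refine ⟨⟨(Equiv.swap m y).bijective.comp hbij, ?_⟩, ?_⟩
      · simp only [Function.comp_apply, h0]
        exact Equiv.swap_apply_of_ne_of_ne hvm (fun h => hvB (by
          rcases Finset.mem_insert.1 hy with h'|h'
          · exact absurd (h.trans h') hvm
          · exact h ▸ h'))
      · have hlv' : β (WithBot.unbotD 0 ((Finset.univ.filter (fun i => β i ∈ insert m B)).max)) = m := hlv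
        simp only [hlastVal, hposeq]
        simp only [Function.comp_apply]
        rw [hlv']
        exact Equiv.swap_apply_left m y
    · intro β _
      funext x
      simp [Equiv.swap_apply_self]
    · intro β _
      funext x
      simp [Equiv.swap_apply_self]
  rw [Finset.sum_congr rfl hfib, Finset.sum_const,
    Finset.card_insert_of_notMem hmB, smul_eq_mul] at hsum
  -- identify the fiber of m with the set in the statement
  have hident : Sv.filter (fun β => lastVal β = m)
      = Finset.univ.filter (fun β : Fin (n+1) → Fin (n+1) => Function.Bijective β ∧ β 0 = v ∧
        ∀ i i' : Fin (n+1), β i ∈ B → β i' = m → i < i') := by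
    ext β
    simp only [hSv, Finset.mem_filter, Finset.mem_univ, true_and, and_assoc]
    constructor
    · rintro ⟨hbij, h0, hlv⟩
      refine ⟨hbij, h0, ?_⟩
      intro i i' hiB hi'm
      obtain ⟨hmem, hle⟩ := hpos β hbij
      set p := WithBot.unbotD 0 ((Finset.univ.filter (fun i => β i ∈ insert m B)).max) with hp
      have hβp : β p = m := hlv
      have hi'p : i' = p := hbij.1 (by rw [hi'm, hβp])
      have hip : i ≤ p :=
        hle i (Finset.mem_filter.2 ⟨Finset.mem_univ i, Finset.mem_insert_of_mem hiB⟩)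
      have hnep : i ≠ p := by
        intro h
        rw [h, hβp] at hiB
        exact hmB hiB
      rw [hi'p]
      exact lt_of_le_of_ne hip hnep
    · rintro ⟨hbij, h0, hcond⟩
      refine ⟨hbij, h0, ?_⟩
      obtain ⟨hmem, hle⟩ := hpos β hbij
      set p := WithBot.unbotD 0 ((Finset.univ.filter (fun i => β i ∈ insert m B)).max) with hp
      simp only [Finset.mem_filter, Finset.mem_univ, true_and] at hmem
      rcases Finset.mem_insert.1 hmem with h|h
      · exact h
      · exfalso
        obtain ⟨i', hi'⟩ := hbij.2 m
        have h1 : p < i' := hcond p i' h hi'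
        have h2 : i' ≤ p := hle i' (Finset.mem_filter.2 ⟨Finset.mem_univ i',
          by rw [hi']; exact Finset.mem_insert_self m B⟩)
        exact absurd h1 (not_lt.mpr h2)
  rw [hident] at hsum
  rw [_root_.card_fixzero] at hsum
  exact (mul_comm _ _).trans hsum.symm

end Counting

section Fiber
variable {n : ℕ}

/-- The unique spot not occupied at the end (junk value if none missing). -/
def mMiss (α : Fin (n+1) → Fin (n+1)) : Fin (n+1) :=
  WithBot.unbotD (α 0) ((Finset.univ \ Finset.image α Finset.univ).max)

def blockB (v m : Fin (n+1)) : Finset (Fin (n+1)) :=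
  Finset.univ.filter (fun t => v < t ∧ (t < m ∨ m < v))

lemma v_not_mem_blockB (v m : Fin (n+1)) : v ∉ blockB v m := by
  simp [blockB]

lemma m_not_mem_blockB (v m : Fin (n+1)) : m ∉ blockB v m := by
  simp only [blockB, Finset.mem_filter, Finset.mem_univ, true_and, not_and, not_or]
  intro hvm
  exact ⟨lt_irrefl m, fun h => absurd (h.trans hvm) (lt_irrefl _)⟩

lemma mem_blockB {v m t : Fin (n+1)} : t ∈ blockB v m ↔ v < t ∧ (t < m ∨ m < v) := by
  simp [blockB]

lemma Q_sdiff {α : Fin (n+1) → Fin (n+1)} {j m : Fin (n+1)}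
    (hj0 : j ≠ 0) (hαj : α j = α 0)
    (hinj : ∀ i i' : Fin (n+1), i ≠ j → i' ≠ j → α i = α i' → i = i')
    (hmne : ∀ i : Fin (n+1), i ≠ j → m ≠ α i) :
    Finset.univ \ Finset.image α Finset.univ = {m} := by
  ext t
  simp only [Finset.mem_sdiff, Finset.mem_univ, true_and, Finset.mem_image,
    Finset.mem_singleton]
  constructor
  · intro ht
    by_contra htm
    obtain ⟨i, hij, hαi⟩ := compl_image_singleton hinj hmne t htm
    exact ht ⟨i, hαi⟩
  · rintro rfl ⟨i, hαi⟩
    by_cases hij : i = j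
    · subst hij
      rw [hαj] at hαi
      exact hmne 0 (fun h => hj0 h.symm) hαi.symm
    · exact hmne i hij hαi.symm

lemma Q_mMiss {α : Fin (n+1) → Fin (n+1)} {j m : Fin (n+1)}
    (hj0 : j ≠ 0) (hαj : α j = α 0)
    (hinj : ∀ i i' : Fin (n+1), i ≠ j → i' ≠ j → α i = α i' → i = i')
    (hmne : ∀ i : Fin (n+1), i ≠ j → m ≠ α i) :
    mMiss α = m := by
  unfold mMiss
  rw [Q_sdiff hj0 hαj hinj hmne]
  rw [Finset.max_singleton]
  rfl

lemma Q_junique {α : Fin (n+1) → Fin (n+1)} {j m : Fin (n+1)}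
    (hj0 : j ≠ 0)
    (hinj : ∀ i i' : Fin (n+1), i ≠ j → i' ≠ j → α i = α i' → i = i')
    (hmne : ∀ i : Fin (n+1), i ≠ j → m ≠ α i) :
    ∀ i : Fin (n+1), i ≠ 0 → α i = α 0 → i = j := by
  intro i hi0 hαi
  by_contra hij
  exact hi0 (hinj i 0 hij (fun h => hj0 h.symm) hαi)

lemma Mpred_iff_Q (α : Fin (n+1) → Fin (n+1)) :
    ((luckyCount α : ℤ) = ((n+1 : ℕ) : ℤ) - 1 ∧
      ∃ i j : Fin (n+1), (i : ℕ) = 0 ∧ j ≠ i ∧ α j = α i) ↔ Qpred α := by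
  rw [← charac α]
  have h : ((luckyCount α : ℤ) = ((n+1 : ℕ) : ℤ) - 1) ↔ luckyCount α = n := by
    constructor
    · intro h; exact_mod_cast (by push_cast at h ⊢; omega : (luckyCount α : ℤ) = (n : ℤ))
    · intro h; rw [h]; push_cast; ring
  rw [h]

end Fiber

section Fiber2
variable {n : ℕ}

lemma toFun_eq {α : Fin (n+1) → Fin (n+1)} {j m : Fin (n+1)}
    (hj0 : j ≠ 0) (hαj : α j = α 0)
    (hinj : ∀ i i' : Fin (n+1), i ≠ j → i' ≠ j → α i = α i' → i = i')
    (hmne : ∀ i : Fin (n+1), i ≠ j → m ≠ α i) :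
    (fun i : Fin (n+1) => if i ≠ 0 ∧ α i = α 0 then mMiss α else α i)
      = fun i => if i = j then m else α i := by
  funext i
  by_cases hij : i = j
  · subst hij
    rw [if_pos ⟨hj0, hαj⟩, if_pos rfl, Q_mMiss hj0 hαj hinj hmne]
  · rw [if_neg (by rintro ⟨hi0, hαi⟩; exact hij (Q_junique hj0 hinj hmne i hi0 hαi)),
      if_neg hij]

lemma backQ {β : Fin (n+1) → Fin (n+1)} {v m j : Fin (n+1)} (hvm : v ≠ m)
    (hbij : Function.Bijective β) (h0 : β 0 = v) (hjm : β j = m)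
    (hcond : ∀ i i' : Fin (n+1), β i ∈ blockB v m → β i' = m → i < i') :
    j ≠ 0 ∧
    (fun i : Fin (n+1) => if β i = m then v else β i) j
      = (fun i : Fin (n+1) => if β i = m then v else β i) 0 ∧
    (∀ i i' : Fin (n+1), i ≠ j → i' ≠ j →
      (fun i : Fin (n+1) => if β i = m then v else β i) i
        = (fun i : Fin (n+1) => if β i = m then v else β i) i' → i = i') ∧
    (∀ i : Fin (n+1), i ≠ j → m ≠ (fun i : Fin (n+1) => if β i = m then v else β i) i) ∧
    (∀ i : Fin (n+1), i ≠ j →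
      (fun i : Fin (n+1) => if β i = m then v else β i) 0
        < (fun i : Fin (n+1) => if β i = m then v else β i) i →
      ((fun i : Fin (n+1) => if β i = m then v else β i) i < m ∨
        m < (fun i : Fin (n+1) => if β i = m then v else β i) 0) → i < j) ∧
    (fun i : Fin (n+1) => if β i = m then v else β i) 0 = v := by
  have hβunique : ∀ i : Fin (n+1), β i = m → i = j := fun i hi => hbij.1 (hi.trans hjm.symm)
  have hα0 : (fun i : Fin (n+1) => if β i = m then v else β i) 0 = v := by
    simp only
    rw [if_neg (by rw [h0]; exact hvm), h0]
  have hαoff : ∀ i : Fin (n+1), i ≠ j →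
      (fun i : Fin (n+1) => if β i = m then v else β i) i = β i := by
    intro i hij
    simp only
    rw [if_neg (fun h => hij (hβunique i h))]
  have hαj : (fun i : Fin (n+1) => if β i = m then v else β i) j = v := by
    simp only
    rw [if_pos hjm]
  have hj0 : j ≠ 0 := by
    intro h
    rw [h, h0] at hjm
    exact hvm hjm
  refine ⟨hj0, by rw [hαj, hα0], ?_, ?_, ?_, hα0⟩
  · intro i i' hij hi'j he
    rw [hαoff i hij, hαoff i' hi'j] at he
    exact hbij.1 he
  · intro i hij he
    rw [hαoff i hij] at he
    exact hij (hβunique i he.symm)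
  · intro i hij h1 h2
    rw [hα0] at h1 h2
    rw [hαoff i hij] at h1 h2
    exact hcond i j (mem_blockB.2 ⟨h1, h2⟩) hjm

lemma competingM_card_eq (n : ℕ) :
    competingM (n+1) = ∑ p ∈ ((Finset.univ ×ˢ Finset.univ).filter
        (fun p : Fin (n+1) × Fin (n+1) => p.1 ≠ p.2)),
      (Finset.univ.filter (fun β : Fin (n+1) → Fin (n+1) => Function.Bijective β ∧ β 0 = p.1 ∧
        ∀ i i' : Fin (n+1), β i ∈ blockB p.1 p.2 → β i' = p.2 → i < i')).card := by
  classical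
  unfold competingM
  rw [Finset.card_eq_sum_card_fiberwise
    (f := fun α : Fin (n+1) → Fin (n+1) => (α 0, mMiss α))
    (t := (Finset.univ ×ˢ Finset.univ).filter
        (fun p : Fin (n+1) × Fin (n+1) => p.1 ≠ p.2)) ?hmap]
  case hmap =>
    intro α hα
    rw [Finset.mem_coe, Finset.mem_filter] at hα
    obtain ⟨j, m, hj0, hαj, hinj, hmne, hblock⟩ := (Mpred_iff_Q α).1 hα.2
    simp only [Finset.mem_coe, Finset.mem_filter, Finset.mem_product, Finset.mem_univ, and_self, true_and,
      Q_mMiss hj0 hαj hinj hmne]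
    exact fun h => hmne 0 (fun h' => hj0 h'.symm) h.symm
  apply Finset.sum_congr rfl
  rintro ⟨v, m⟩ hp
  simp only [Finset.mem_filter, Finset.mem_product, Finset.mem_univ, and_self, true_and] at hp
  have hvm : v ≠ m := hp
  apply Finset.card_bij'
    (i := fun α _ => (fun i => if i ≠ 0 ∧ α i = α 0 then mMiss α else α i : Fin (n+1) → Fin (n+1)))
    (j := fun β _ => (fun i => if β i = m then v else β i : Fin (n+1) → Fin (n+1)))
  · -- forward map lands in target
    intro α hα
    simp only [Finset.mem_filter, Finset.mem_univ, true_and] at hα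
    obtain ⟨hM, hfib⟩ := hα
    obtain ⟨j, m', hj0, hαj, hinj, hmne, hblock⟩ := (Mpred_iff_Q α).1 hM
    have hv : α 0 = v := congrArg Prod.fst hfib
    have hm : mMiss α = m := congrArg Prod.snd hfib
    have hm' : m' = m := by rw [← Q_mMiss hj0 hαj hinj hmne, hm]
    rw [hm'] at hmne hblock
    rw [toFun_eq hj0 hαj hinj hmne]
    simp only [Finset.mem_filter, Finset.mem_univ, true_and]
    refine ⟨?_, ?_, ?_⟩
    · rw [← Finite.injective_iff_bijective]
      intro i i' hii'
      simp only at hii'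
      by_cases hij : i = j <;> by_cases hi'j : i' = j
      · rw [hij, hi'j]
      · rw [if_pos hij, if_neg hi'j] at hii'
        exact absurd hii' (hmne i' hi'j)
      · rw [if_neg hij, if_pos hi'j] at hii'
        exact absurd hii'.symm (hmne i hij)
      · rw [if_neg hij, if_neg hi'j] at hii'
        exact hinj i i' hij hi'j hii'
    · rw [if_neg (fun h => hj0 h.symm), hv]
    · intro i i' hiB hi'm
      have hi'j : i' = j := by
        by_contra hi'j
        rw [if_neg hi'j] at hi'm
        exact hmne i' hi'j hi'm.symm
      have hij : i ≠ j := by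
        intro hij
        rw [hij, if_pos rfl] at hiB
        exact m_not_mem_blockB v m hiB
      rw [if_neg hij] at hiB
      rw [mem_blockB] at hiB
      rw [hi'j]
      exact hblock i hij (by rw [hv]; exact hiB.1) (by rw [hv]; exact hiB.2)
  · -- backward map lands in source
    intro β hβ
    simp only [Finset.mem_filter, Finset.mem_univ, true_and] at hβ
    obtain ⟨hbij, h0, hcond⟩ := hβ
    obtain ⟨j, hjm⟩ := hbij.2 m
    obtain ⟨hj0, hαj, hinj, hmne, hblock, hα0⟩ := backQ hvm hbij h0 hjm hcond
    simp only [Finset.mem_filter, Finset.mem_univ, true_and]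
    refine ⟨(Mpred_iff_Q _).2 ⟨j, m, hj0, hαj, hinj, hmne, hblock⟩, ?_⟩
    have := Q_mMiss hj0 hαj hinj hmne
    rw [Prod.mk.injEq]
    exact ⟨hα0, this⟩
  · -- left inverse
    intro α hα
    simp only [Finset.mem_filter, Finset.mem_univ, true_and] at hα
    obtain ⟨hM, hfib⟩ := hα
    obtain ⟨j, m', hj0, hαj, hinj, hmne, hblock⟩ := (Mpred_iff_Q α).1 hM
    have hv : α 0 = v := congrArg Prod.fst hfib
    have hm : mMiss α = m := congrArg Prod.snd hfib
    have hm' : m' = m := by rw [← Q_mMiss hj0 hαj hinj hmne, hm]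
    rw [hm'] at hmne hblock
    have key : (fun i : Fin (n+1) =>
        if ((fun i' : Fin (n+1) => if i' ≠ 0 ∧ α i' = α 0 then mMiss α else α i') i) = m then v
        else (fun i' : Fin (n+1) => if i' ≠ 0 ∧ α i' = α 0 then mMiss α else α i') i) = α := by
      rw [toFun_eq hj0 hαj hinj hmne]
      funext i
      simp only
      by_cases hij : i = j
      · rw [if_pos hij, if_pos rfl, hij]
        exact (hαj.trans hv).symm
      · rw [if_neg hij, if_neg (fun h => hmne i hij h.symm)]
    exact key
  · -- right inverse
    intro β hβ
    simp only [Finset.mem_filter, Finset.mem_univ, true_and] at hβ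
    obtain ⟨hbij, h0, hcond⟩ := hβ
    obtain ⟨j, hjm⟩ := hbij.2 m
    obtain ⟨hj0, hαj, hinj, hmne, hblock, hα0⟩ := backQ hvm hbij h0 hjm hcond
    have key : (fun i : Fin (n+1) =>
        if i ≠ 0 ∧ (fun i' : Fin (n+1) => if β i' = m then v else β i') i
            = (fun i' : Fin (n+1) => if β i' = m then v else β i') 0
        then mMiss (fun i' : Fin (n+1) => if β i' = m then v else β i')
        else (fun i' : Fin (n+1) => if β i' = m then v else β i') i) = β := by
      rw [toFun_eq hj0 hαj hinj hmne]
      funext i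
      by_cases hij : i = j
      · rw [if_pos hij, hij, hjm]
      · rw [if_neg hij]
        rw [if_neg (fun h => hij (hbij.1 (h.trans hjm.symm)))]
    exact key

end Fiber2

section Arith
variable {n : ℕ}

lemma blockB_card {v m : Fin (n+1)} (hvm : v ≠ m) :
    (blockB v m).card + 1 = if (v:ℕ) < (m:ℕ) then (m:ℕ) - (v:ℕ) else (n+1) - (v:ℕ) := by
  rcases lt_trichotomy v m with h|h|h
  · rw [if_pos (show (v:ℕ) < (m:ℕ) from h)]
    have hB : blockB v m = Finset.Ioo v m := by
      ext t
      rw [mem_blockB, Finset.mem_Ioo]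
      constructor
      · rintro ⟨h1, h2|h2⟩
        · exact ⟨h1, h2⟩
        · exact absurd (h2.trans h) (lt_irrefl _)
      · rintro ⟨h1, h2⟩
        exact ⟨h1, Or.inl h2⟩
    rw [hB, Fin.card_Ioo]
    have : (v:ℕ) < (m:ℕ) := h
    omega
  · exact absurd h hvm
  · rw [if_neg (by have : (m:ℕ) < (v:ℕ) := h; omega)]
    have hB : blockB v m = Finset.Ioi v := by
      ext t
      rw [mem_blockB, Finset.mem_Ioi]
      constructor
      · rintro ⟨h1, -⟩; exact h1
      · intro h1; exact ⟨h1, Or.inr h⟩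
    rw [hB, Fin.card_Ioi]
    have h1 : (m:ℕ) < (v:ℕ) := h
    have h2 : (v:ℕ) < n+1 := v.isLt
    omega

/-- partial harmonic sum -/
def Hs (N : ℕ) : ℚ := ∑ k ∈ Finset.range N, 1/((k:ℚ)+1)

lemma Hs_succ (N : ℕ) : Hs (N+1) = Hs N + 1/((N:ℚ)+1) := by
  unfold Hs
  rw [Finset.sum_range_succ]

lemma sum_Hs (N : ℕ) : ∑ m ∈ Finset.range N, Hs m = N * Hs N - N := by
  induction N with
  | zero => simp [Hs]
  | succ N ih =>
    rw [Finset.sum_range_succ, ih, Hs_succ]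
    have hN : ((N:ℚ)+1) ≠ 0 := by positivity
    push_cast
    field_simp
    ring

lemma card_rat (v m : Fin (n+1)) (hvm : v ≠ m) :
    ((Finset.univ.filter (fun β : Fin (n+1) → Fin (n+1) => Function.Bijective β ∧ β 0 = v ∧
        ∀ i i' : Fin (n+1), β i ∈ blockB v m → β i' = m → i < i')).card : ℚ)
      = (Nat.factorial n : ℚ) /
        (if (v:ℕ) < (m:ℕ) then ((m:ℕ):ℚ) - ((v:ℕ):ℚ) else ((n:ℕ):ℚ) + 1 - ((v:ℕ):ℚ)) := by
  have hvB : v ∉ blockB v m := v_not_mem_blockB v m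
  have hmB : m ∉ blockB v m := m_not_mem_blockB v m
  have hkey := card_lastcond n v m (blockB v m) hvm hvB hmB
  have hbc := blockB_card hvm
  rw [hbc] at hkey
  have haux : ∀ (C b : ℕ), 0 < b → C * b = n.factorial → (C:ℚ) = (n.factorial : ℚ) / (b:ℚ) := by
    intro C b hb hCb
    rw [eq_div_iff (by exact_mod_cast hb.ne')]
    exact_mod_cast hCb
  rcases Nat.lt_or_ge (v:ℕ) (m:ℕ) with h|h
  · rw [if_pos h] at hkey
    rw [if_pos h]
    rw [show ((m:ℕ):ℚ) - ((v:ℕ):ℚ) = (((m:ℕ) - (v:ℕ) : ℕ) : ℚ) from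
      (Nat.cast_sub (Nat.le_of_lt h)).symm]
    exact haux _ _ (Nat.sub_pos_of_lt h) hkey
  · have hlt : (m:ℕ) < (v:ℕ) :=
      lt_of_le_of_ne h (fun he => hvm (Fin.ext he.symm))
    rw [if_neg (not_lt.mpr (Nat.le_of_lt hlt))] at hkey
    rw [if_neg (not_lt.mpr (Nat.le_of_lt hlt))]
    have hv : (v:ℕ) ≤ n := Nat.lt_succ_iff.1 v.isLt
    rw [show ((n:ℕ):ℚ) + 1 - ((v:ℕ):ℚ) = (((n+1) - (v:ℕ) : ℕ) : ℚ) from by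
      rw [Nat.cast_sub (Nat.le_of_lt v.isLt)]; push_cast; ring]
    exact haux _ _ (Nat.sub_pos_of_lt (Nat.lt_succ_of_le hv)) hkey

end Arith

section Closed

lemma competingM_rat (n : ℕ) :
    (competingM (n+1) : ℚ) = ∑ v ∈ Finset.range (n+1), ∑ m ∈ Finset.range (n+1),
      (if v ≠ m then (n.factorial : ℚ) /
          (if v < m then (m:ℚ) - (v:ℚ) else ((n+1 : ℕ):ℚ) - (v:ℚ)) else 0) := by
  have h1 : (competingM (n+1) : ℚ)
      = ∑ x : Fin (n+1), ∑ y : Fin (n+1),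
        (if x ≠ y then ((Finset.univ.filter (fun β : Fin (n+1) → Fin (n+1) =>
          Function.Bijective β ∧ β 0 = x ∧
          ∀ i i' : Fin (n+1), β i ∈ blockB x y → β i' = y → i < i')).card : ℚ) else 0) := by
    rw [competingM_card_eq n, Nat.cast_sum, Finset.sum_filter, Finset.sum_product]
  rw [h1]
  have h2 : ∀ x y : Fin (n+1),
      (if x ≠ y then ((Finset.univ.filter (fun β : Fin (n+1) → Fin (n+1) =>
          Function.Bijective β ∧ β 0 = x ∧
          ∀ i i' : Fin (n+1), β i ∈ blockB x y → β i' = y → i < i')).card : ℚ) else 0)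
      = (if (x:ℕ) ≠ (y:ℕ) then (n.factorial : ℚ) /
          (if (x:ℕ) < (y:ℕ) then (((y:ℕ)):ℚ) - (((x:ℕ)):ℚ)
            else ((n+1 : ℕ):ℚ) - (((x:ℕ)):ℚ)) else 0) := by
    intro x y
    by_cases hxy : x = y
    · rw [if_neg (by simp [hxy]), if_neg (by simp [hxy])]
    · have hxy' : (x:ℕ) ≠ (y:ℕ) := fun he => hxy (Fin.ext he)
      rw [if_pos hxy, if_pos hxy', card_rat x y hxy]
      rcases Nat.lt_or_ge (x:ℕ) (y:ℕ) with h|h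
      · rw [if_pos h, if_pos h]
      · rw [if_neg (not_lt.mpr h), if_neg (not_lt.mpr h)]
        push_cast
        ring
  rw [Finset.sum_congr rfl (fun x _ => Finset.sum_congr rfl (fun y _ => h2 x y))]
  have h3 : ∀ x : Fin (n+1),
      (∑ y : Fin (n+1), (if (x:ℕ) ≠ (y:ℕ) then (n.factorial : ℚ) /
          (if (x:ℕ) < (y:ℕ) then (((y:ℕ)):ℚ) - (((x:ℕ)):ℚ)
            else ((n+1 : ℕ):ℚ) - (((x:ℕ)):ℚ)) else 0))
      = ∑ m ∈ Finset.range (n+1), (if (x:ℕ) ≠ m then (n.factorial : ℚ) /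
          (if (x:ℕ) < m then ((m:ℕ):ℚ) - (((x:ℕ)):ℚ)
            else ((n+1 : ℕ):ℚ) - (((x:ℕ)):ℚ)) else 0) := by
    intro x
    exact Fin.sum_univ_eq_sum_range (fun b => if (x:ℕ) ≠ b then (n.factorial : ℚ) /
          (if (x:ℕ) < b then ((b:ℕ):ℚ) - (((x:ℕ)):ℚ)
            else ((n+1 : ℕ):ℚ) - (((x:ℕ)):ℚ)) else 0) (n+1)
  rw [Finset.sum_congr rfl (fun x _ => h3 x)]
  exact Fin.sum_univ_eq_sum_range (fun a => ∑ m ∈ Finset.range (n+1),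
    (if a ≠ m then (n.factorial : ℚ) /
      (if a < m then ((m:ℕ):ℚ) - ((a:ℕ):ℚ) else ((n+1 : ℕ):ℚ) - ((a:ℕ):ℚ)) else 0)) (n+1)

lemma A_closed (N : ℕ) (c : ℚ) :
    (∑ v ∈ Finset.range N, ∑ m ∈ Finset.range N,
      (if v ≠ m then c / (if v < m then (m:ℚ) - (v:ℚ) else (N:ℚ) - (v:ℚ)) else 0))
    = 2 * c * ((N:ℚ) * Hs N - (N:ℚ)) := by
  have hsplit : ∀ v m : ℕ, (if v ≠ m then c / (if v < m then (m:ℚ) - (v:ℚ)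
        else (N:ℚ) - (v:ℚ)) else 0)
      = (if v < m then c/((m:ℚ)-(v:ℚ)) else 0) + (if m < v then c/((N:ℚ)-(v:ℚ)) else 0) := by
    intro v m
    rcases lt_trichotomy v m with h|h|h
    · rw [if_pos (Nat.ne_of_lt h), if_pos h, if_pos h, if_neg (by omega), add_zero]
    · subst h
      rw [if_neg (by omega), if_neg (by omega), if_neg (by omega), add_zero]
    · rw [if_pos (by omega : v ≠ m), if_neg (by omega), if_neg (by omega), if_pos h, zero_add]
  rw [Finset.sum_congr rfl (fun v _ => Finset.sum_congr rfl (fun m _ => hsplit v m))]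
  rw [Finset.sum_congr rfl (fun v _ => Finset.sum_add_distrib), Finset.sum_add_distrib]
  have hT1 : (∑ v ∈ Finset.range N, ∑ m ∈ Finset.range N,
      (if v < m then c/((m:ℚ)-(v:ℚ)) else 0)) = c * ((N:ℚ) * Hs N - (N:ℚ)) := by
    have hinner : ∀ v, v ∈ Finset.range N →
        (∑ m ∈ Finset.range N, (if v < m then c/((m:ℚ)-(v:ℚ)) else 0))
          = c * Hs (N - 1 - v) := by
      intro v hv
      rw [← Finset.sum_filter]
      have hf : (Finset.range N).filter (fun m => v < m) = Finset.Ico (v+1) N := by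
        ext a
        simp only [Finset.mem_filter, Finset.mem_range, Finset.mem_Ico]
        omega
      rw [hf, Finset.sum_Ico_eq_sum_range]
      have hterm : ∀ k, c / ((((v+1+k) : ℕ):ℚ) - (v:ℚ)) = c * (1/((k:ℚ)+1)) := by
        intro k
        have : (((v+1+k) : ℕ):ℚ) - (v:ℚ) = (k:ℚ)+1 := by push_cast; ring
        rw [this]
        ring
      rw [Finset.sum_congr rfl (fun k _ => hterm k)]
      rw [← Finset.mul_sum]
      have : N - (v+1) = N - 1 - v := by omega
      rw [this]
      rfl
    rw [Finset.sum_congr rfl hinner]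
    have hrefl : (∑ v ∈ Finset.range N, c * Hs (N - 1 - v))
        = ∑ v ∈ Finset.range N, c * Hs v := Finset.sum_range_reflect (fun v => c * Hs v) N
    rw [hrefl, ← Finset.mul_sum, sum_Hs]
  have hT2 : (∑ v ∈ Finset.range N, ∑ m ∈ Finset.range N,
      (if m < v then c/((N:ℚ)-(v:ℚ)) else 0)) = c * ((N:ℚ) * Hs N - (N:ℚ)) := by
    have hinner : ∀ v, v ∈ Finset.range N →
        (∑ m ∈ Finset.range N, (if m < v then c/((N:ℚ)-(v:ℚ)) else 0))
          = (v:ℚ) * (c/((N:ℚ)-(v:ℚ))) := by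
      intro v hv
      rw [← Finset.sum_filter]
      have hf : (Finset.range N).filter (fun m => m < v) = Finset.range v := by
        ext a
        simp only [Finset.mem_filter, Finset.mem_range]
        rw [Finset.mem_range] at hv
        omega
      rw [hf, Finset.sum_const, Finset.card_range, nsmul_eq_mul]
    rw [Finset.sum_congr rfl hinner]
    rw [← Finset.sum_range_reflect (fun v => (v:ℚ) * (c/((N:ℚ)-(v:ℚ)))) N]
    have hterm : ∀ v, v ∈ Finset.range N →
        (((N - 1 - v : ℕ)):ℚ) * (c/((N:ℚ)-((N - 1 - v : ℕ):ℚ)))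
          = (N:ℚ) * (c * (1/((v:ℚ)+1))) - c := by
      intro v hv
      rw [Finset.mem_range] at hv
      have h1 : (((N - 1 - v : ℕ)):ℚ) = (N:ℚ) - 1 - (v:ℚ) := by
        have : ((N - 1 - v : ℕ)) = N - (1 + v) := by omega
        rw [this, Nat.cast_sub (by omega)]
        push_cast
        ring
      rw [h1]
      have h2 : (N:ℚ) - ((N:ℚ) - 1 - (v:ℚ)) = (v:ℚ) + 1 := by ring
      rw [h2]
      have h3 : ((v:ℚ)+1) ≠ 0 := by positivity
      field_simp
      ring
    rw [Finset.sum_congr rfl hterm]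
    rw [Finset.sum_sub_distrib, ← Finset.mul_sum, ← Finset.mul_sum, Finset.sum_const,
      Finset.card_range, nsmul_eq_mul]
    rw [show (∑ i ∈ Finset.range N, 1/((i:ℚ)+1)) = Hs N from rfl]
    ring
  rw [hT1, hT2]
  ring

lemma competingM_closed (n : ℕ) :
    (competingM (n+1) : ℚ)
      = 2 * (n.factorial : ℚ) * (((n+1 : ℕ):ℚ) * Hs (n+1) - ((n+1 : ℕ):ℚ)) := by
  rw [competingM_rat n, A_closed (n+1) (n.factorial : ℚ)]

end Closed

/-- `|M₂| = 2` and `|Mₙ| = n|Mₙ₋₁| + 2(n-1)!` for all `n ≥ 3`. -/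
theorem competingM_recurrence :
    competingM 2 = 2 ∧
    ∀ n : ℕ, 3 ≤ n →
      competingM n = n * competingM (n - 1) + 2 * Nat.factorial (n - 1) := by
  constructor
  · have h := competingM_closed 1
    have hH : Hs 2 = 3/2 := by
      unfold Hs
      rw [Finset.sum_range_succ, Finset.sum_range_succ, Finset.sum_range_zero]
      norm_num
    rw [hH] at h
    norm_num at h
    exact_mod_cast h
  · intro n hn
    obtain ⟨k, rfl⟩ : ∃ k, n = k + 2 := ⟨n - 2, by omega⟩
    have h1 := competingM_closed (k+1)
    have h2 := competingM_closed k
    have hfact : ((k+1).factorial : ℚ) = ((k:ℚ)+1) * (k.factorial : ℚ) := by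
      rw [Nat.factorial_succ]
      push_cast
      ring
    have hHs : Hs (k+2) = Hs (k+1) + 1/((k:ℚ)+2) := by
      have := Hs_succ (k+1)
      rw [this]
      push_cast
      ring_nf
    have hk2 : ((k:ℚ)+2) ≠ 0 := by positivity
    have key : (competingM (k+2) : ℚ)
        = ((k+2 : ℕ) : ℚ) * (competingM (k+1) : ℚ) + 2 * ((k+1).factorial : ℚ) := by
      have h1' : (competingM (k+1+1) : ℚ)
          = 2 * ((k+1).factorial : ℚ) * (((k+1+1 : ℕ):ℚ) * Hs (k+1+1) - ((k+1+1 : ℕ):ℚ)) := h1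
      rw [show k+1+1 = k+2 from rfl] at h1'
      rw [h1', h2, hHs, hfact]
      push_cast
      field_simp
      ring
    have hsub : k + 2 - 1 = k + 1 := rfl
    rw [hsub]
    exact_mod_cast key
end

section
/- If α = (p₁,…,pₙ) ∈ [n]^n is a preference list with exactly n−1 lucky cars, then α contains exactly one duplicated entry: there is exactly one pair of indices i < j with p_i = p_j, and all other entries of α are pairwise distinct and distinct from this common value. Consequently there is exactly one spot in [n] that is not preferred by any car. -/
open Finset

lemma nextSpot_eq_some {n : ℕ} {occ : Finset (Fin n)} {p s : Fin n}
    (h : nextSpot occ p = some s) : p ≤ s ∧ s ∉ occ := by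
  unfold nextSpot at h
  split_ifs at h with hne
  · injection h with h'
    have := Finset.min'_mem _ hne
    rw [h'] at this
    rw [Finset.mem_filter] at this
    exact this.2


lemma nextSpot_self {n : ℕ} {occ : Finset (Fin n)} {p : Fin n} (h : p ∉ occ) :
    nextSpot occ p = some p := by
  unfold nextSpot
  have hp : p ∈ Finset.univ.filter (fun s : Fin n => p ≤ s ∧ s ∉ occ) := by
    simp [h]
  rw [dif_pos ⟨p, hp⟩]
  congr 1
  refine le_antisymm (Finset.min'_le _ _ hp) ?_
  have := Finset.min'_mem _ ⟨p, hp⟩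
  rw [Finset.mem_filter] at this
  exact this.2.1

lemma occ_subset_succ {n : ℕ} (α : Fin n → Fin n) (k : ℕ) :
    occupiedAfter α k ⊆ occupiedAfter α (k+1) := by
  rw [occupiedAfter]
  split
  · split
    · exact Finset.subset_insert _ _
    · exact subset_rfl
  · exact subset_rfl

lemma occ_mono {n : ℕ} (α : Fin n → Fin n) {k m : ℕ} (h : k ≤ m) :
    occupiedAfter α k ⊆ occupiedAfter α m := by
  induction m with
  | zero => simp [Nat.le_zero.mp h]
  | succ m ih =>
    rcases Nat.lt_or_ge k (m+1) with h' | h'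
    · exact (ih (Nat.lt_succ_iff.mp h')).trans (occ_subset_succ α m)
    · have : k = m + 1 := le_antisymm h h'
      subst this; exact subset_rfl

lemma lucky_mem_occ {n : ℕ} {α : Fin n → Fin n} {i : Fin n}
    (h : carSpot α i = some (α i)) {k : ℕ} (hk : i.val < k) :
    α i ∈ occupiedAfter α k := by
  have h1 : α i ∈ occupiedAfter α (i.val + 1) := by
    rw [occupiedAfter, dif_pos i.isLt]
    have : (⟨i.val, i.isLt⟩ : Fin n) = i := rfl
    rw [this]
    unfold carSpot at h
    rw [h]
    exact Finset.mem_insert_self _ _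
  exact occ_mono α hk h1

lemma lucky_not_occ {n : ℕ} {α : Fin n → Fin n} {i : Fin n}
    (h : carSpot α i = some (α i)) : α i ∉ occupiedAfter α i.val :=
  (nextSpot_eq_some h).2

lemma lucky_inj {n : ℕ} {α : Fin n → Fin n} {i j : Fin n}
    (hi : carSpot α i = some (α i)) (hj : carSpot α j = some (α j))
    (hij : i ≠ j) : α i ≠ α j := by
  rcases lt_or_gt_of_ne hij with hlt | hlt
  · intro he
    exact lucky_not_occ hj (he ▸ lucky_mem_occ hi hlt)
  · intro he
    exact lucky_not_occ hi (he ▸ lucky_mem_occ hj hlt)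

lemma inj_occ {n : ℕ} {α : Fin n → Fin n} (hinj : Function.Injective α) :
    ∀ k, k ≤ n → occupiedAfter α k = (Finset.univ.filter (fun j : Fin n => j.val < k)).image α := by
  intro k
  induction k with
  | zero => intro _; simp [occupiedAfter]
  | succ k ih =>
    intro hk
    have hkn : k < n := hk
    have ihe := ih (le_of_lt hkn)
    have hnotin : α ⟨k, hkn⟩ ∉ occupiedAfter α k := by
      rw [ihe]
      simp only [Finset.mem_image, Finset.mem_filter, Finset.mem_univ, true_and]
      rintro ⟨j, hj, hje⟩
      have h2 : j.val = k := congrArg Fin.val (hinj hje)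
      omega
    rw [occupiedAfter, dif_pos hkn, nextSpot_self hnotin]
    rw [ihe]
    ext s
    simp only [Finset.mem_insert, Finset.mem_image, Finset.mem_filter, Finset.mem_univ, true_and]
    constructor
    · rintro (rfl | ⟨j, hj, rfl⟩)
      · exact ⟨⟨k, hkn⟩, Nat.lt_succ_self k, rfl⟩
      · exact ⟨j, Nat.lt_succ_of_lt hj, rfl⟩
    · rintro ⟨j, hj, rfl⟩
      rcases Nat.lt_succ_iff_lt_or_eq.mp hj with h' | h'
      · exact Or.inr ⟨j, h', rfl⟩
      · left
        congr
        exact Fin.ext h'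

lemma inj_all_lucky {n : ℕ} {α : Fin n → Fin n} (hinj : Function.Injective α)
    (i : Fin n) : carSpot α i = some (α i) := by
  have hni : α i ∉ occupiedAfter α i.val := by
    rw [inj_occ hinj i.val (le_of_lt i.isLt)]
    simp only [Finset.mem_image, Finset.mem_filter, Finset.mem_univ, true_and]
    rintro ⟨j, hj, hje⟩
    have h2 : j.val = i.val := congrArg Fin.val (hinj hje)
    omega
  exact nextSpot_self hni

/-- A preference list with exactly `n-1` lucky cars has exactly one duplicated entry:
there is a unique pair `i < j` with `α i = α j` (so all other entries are pairwise
distinct and distinct from the common value), and consequently exactly one spot is not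
preferred by any car. -/
theorem unique_duplicate_of_lucky (n : ℕ) (α : Fin n → Fin n)
    (h : (luckyCount α : ℤ) = (n : ℤ) - 1) :
    (∃! p : Fin n × Fin n, p.1 < p.2 ∧ α p.1 = α p.2) ∧
    (∃! s : Fin n, ∀ i : Fin n, α i ≠ s) := by
  have hn1 : 1 ≤ n := by omega
  have hlc : luckyCount α = n - 1 := by omega
  -- α is not injective
  have hninj : ¬ Function.Injective α := by
    intro hinj
    have : luckyCount α = n := by
      unfold luckyCount
      rw [Finset.filter_true_of_mem (fun i _ => inj_all_lucky hinj i)]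
      simp
    omega
  -- extract a duplicate pair i < j
  rcases Function.not_injective_iff.mp hninj with ⟨a, b, hab, hne⟩
  obtain ⟨i, j, hij, hdup⟩ : ∃ i j : Fin n, i < j ∧ α i = α j := by
    rcases lt_or_gt_of_ne hne with hlt | hlt
    · exact ⟨a, b, hlt, hab⟩
    · exact ⟨b, a, hlt, hab.symm⟩
  -- image cardinality bounds
  have hLcard : (Finset.univ.filter (fun i : Fin n => carSpot α i = some (α i))).card = n - 1 := hlc
  have himg_ge : n - 1 ≤ (Finset.univ.image α).card := by
    have hinjL : Set.InjOn α ↑(Finset.univ.filter (fun i : Fin n => carSpot α i = some (α i))) := by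
      intro x hx y hy hxy
      by_contra hxyne
      rw [Finset.coe_filter] at hx hy
      exact lucky_inj hx.2 hy.2 hxyne hxy
    calc n - 1 = ((Finset.univ.filter (fun i : Fin n => carSpot α i = some (α i))).image α).card := by
          rw [Finset.card_image_of_injOn hinjL, hLcard]
      _ ≤ (Finset.univ.image α).card :=
          Finset.card_le_card (Finset.image_subset_image (Finset.subset_univ _))
  have himg_eq_erase : (Finset.univ : Finset (Fin n)).image α = (Finset.univ.erase j).image α := by
    apply le_antisymm
    · intro s hs
      rw [Finset.mem_image] at hs ⊢
      rcases hs with ⟨k, _, rfl⟩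
      by_cases hkj : k = j
      · exact ⟨i, Finset.mem_erase.mpr ⟨ne_of_lt hij, Finset.mem_univ i⟩, by rw [hkj, ← hdup]⟩
      · exact ⟨k, Finset.mem_erase.mpr ⟨hkj, Finset.mem_univ k⟩, rfl⟩
    · exact Finset.image_subset_image (Finset.erase_subset _ _)
  have himg_le : (Finset.univ.image α).card ≤ n - 1 := by
    rw [himg_eq_erase]
    calc ((Finset.univ.erase j).image α).card ≤ (Finset.univ.erase j).card := Finset.card_image_le
      _ = n - 1 := by rw [Finset.card_erase_of_mem (Finset.mem_univ j), Finset.card_univ, Fintype.card_fin]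
  have himg : (Finset.univ.image α).card = n - 1 := le_antisymm himg_le himg_ge
  -- α is injective on univ.erase j
  have hinjE : Set.InjOn α ↑(Finset.univ.erase j) := by
    rw [← Finset.card_image_iff]
    rw [← himg_eq_erase, himg, Finset.card_erase_of_mem (Finset.mem_univ j), Finset.card_univ, Fintype.card_fin]
  constructor
  · refine ⟨(i, j), ⟨hij, hdup⟩, ?_⟩
    rintro ⟨k, l⟩ ⟨hkl, hkle⟩
    simp only at hkl hkle
    have hmem : ∀ x : Fin n, x ≠ j → x ∈ (↑(Finset.univ.erase j) : Set (Fin n)) := by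
      intro x hx; simp [hx]
    have himem := hmem i (ne_of_lt hij)
    by_cases hlj : l = j
    · subst hlj
      have hk : k = i := hinjE (hmem k (ne_of_lt hkl)) himem (hkle.trans hdup.symm)
      rw [hk]
    · by_cases hkj : k = j
      · subst hkj
        have hl : l = i := hinjE (hmem l (ne_of_gt hkl)) himem (hkle.symm.trans hdup.symm)
        exfalso
        rw [hl] at hkl
        exact absurd (hij.trans hkl) (lt_irrefl i)
      · have : k = l := hinjE (hmem k hkj) (hmem l hlj) hkle
        exact absurd (this ▸ hkl) (lt_irrefl l)
  · -- unique missing spot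
    have hcompl : ((Finset.univ : Finset (Fin n)) \ Finset.univ.image α).card = 1 := by
      rw [Finset.card_sdiff_of_subset (Finset.subset_univ _), Finset.card_univ, Fintype.card_fin, himg]
      omega
    rcases Finset.card_eq_one.mp hcompl with ⟨s, hs⟩
    refine ⟨s, ?_, ?_⟩
    · intro i'
      have : s ∈ (Finset.univ : Finset (Fin n)) \ Finset.univ.image α := by
        rw [hs]; exact Finset.mem_singleton_self s
      rw [Finset.mem_sdiff, Finset.mem_image] at this
      intro he
      exact this.2 ⟨i', Finset.mem_univ i', he⟩
    · intro t ht
      have : t ∈ (Finset.univ : Finset (Fin n)) \ Finset.univ.image α := by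
        rw [Finset.mem_sdiff, Finset.mem_image]
        exact ⟨Finset.mem_univ t, by rintro ⟨i', _, he⟩; exact ht i' he⟩
      rw [hs, Finset.mem_singleton] at this
      exact this
end
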